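/- arXiv:1703.06463 — 2 statements merged into one kernel-verified Lean document; each statement's English description precedes it below -/
import Mathlib

section
/- Let α ≥ 0 and β be real numbers, let C = [[α, β], [−β, α]], let M be a real symmetric positive definite n×n matrix, let A be a real symmetric positive semidefinite n×n matrix, let P be a real symmetric positive definite n×n matrix, and let Δt ≥ 0. Set 𝔹 = (I₂ ⊗ P^{-1/2})(I₂ ⊗ M + Δt·(C ⊗ A))(I₂ ⊗ P^{-1/2}). Then the symmetric part (𝔹 + 𝔹ᵀ)/2 is positive definite and κ̃(𝔹) ≤ (λ_max(P^{-1/2} M P^{-1/2}) + Δt · √(α² + β²) · λ_max(P^{-1/2} A P^{-1/2})) / (λ_min(P^{-1/2} M P^{-1/2}) + Δt · α · λ_min(P^{-1/2} A P^{-1/2})). -/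
open Matrix Kronecker

/-- The smallest eigenvalue of a (symmetric) real matrix, as the infimum of its spectrum. -/
noncomputable def lamMin {m : Type*} [Fintype m] [DecidableEq m] (A : Matrix m m ℝ) : ℝ :=
  sInf (spectrum ℝ A)

/-- The largest eigenvalue of a (symmetric) real matrix, as the supremum of its spectrum. -/
noncomputable def lamMax {m : Type*} [Fintype m] [DecidableEq m] (A : Matrix m m ℝ) : ℝ :=
  sSup (spectrum ℝ A)

/-- The largest singular value of a real square matrix. -/
noncomputable def sigmaMax {m : Type*} [Fintype m] [DecidableEq m] (B : Matrix m m ℝ) : ℝ :=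
  Real.sqrt (lamMax (Bᵀ * B))

/-- `P^{-1/2}`: the inverse of the unique symmetric positive definite square root of `P`. -/
noncomputable def Matrix.PosDef.invSqrt {m : Type*} [Fintype m] [DecidableEq m]
    {P : Matrix m m ℝ} (hP : P.PosDef) : Matrix m m ℝ :=
  (hP.posSemidef.1.eigenvectorUnitary.1 * diagonal ((↑) ∘ (√·) ∘ hP.posSemidef.1.eigenvalues) *
    (star hP.posSemidef.1.eigenvectorUnitary : Matrix m m ℝ))⁻¹

/-- The modified condition number `κ̃(B) = σ_max(B) / λ_min((B + Bᵀ)/2)`. -/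
noncomputable def ktilde {m : Type*} [Fintype m] [DecidableEq m] (B : Matrix m m ℝ) : ℝ :=
  sigmaMax B / lamMin ((1 / 2 : ℝ) • (B + Bᵀ))

/-! After conjugation by `I₂ ⊗ P^{-1/2}` the matrix is `𝔹 = I₂ ⊗ S₁ + Δt • (C ⊗ S₂)` with
`S₁ = P^{-1/2} M P^{-1/2}` positive definite and `S₂ = P^{-1/2} A P^{-1/2}` positive semidefinite.
Since `C + Cᵀ = 2α I₂`, the symmetric part of `𝔹` is `I₂ ⊗ (S₁ + Δt α S₂)`, and the Loewner order
bounds its smallest eigenvalue below by `λ_min(S₁) + Δt α λ_min(S₂)`. The largest singular value is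
the ℓ² operator norm; by the triangle inequality and `C ⊗ S₂ = (C ⊗ I)(I₂ ⊗ S₂)`, where `C ⊗ I` is
`√(α² + β²)` times an orthogonal matrix, it is at most `λ_max(S₁) + Δt √(α² + β²) λ_max(S₂)`. -/

namespace Matrix

open MatrixOrder
open scoped Matrix.Norms.L2Operator

section Kronecker

variable {m l : Type*} [Fintype m] [Fintype l] [DecidableEq l]

lemma one_kronecker_mono {S T : Matrix m m ℝ} (h : S ≤ T) :
    (1 : Matrix l l ℝ) ⊗ₖ S ≤ 1 ⊗ₖ T := by
  have hsub : (1 : Matrix l l ℝ) ⊗ₖ T - 1 ⊗ₖ S = 1 ⊗ₖ (T - S) := by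
    ext ⟨i, j⟩ ⟨i', j'⟩
    simp [mul_sub]
  rw [le_iff, hsub]
  exact PosSemidef.one.kronecker h

lemma one_kronecker_mul_kronecker_mul_one_kronecker (Q Y : Matrix m m ℝ) (X : Matrix l l ℝ) :
    ((1 : Matrix l l ℝ) ⊗ₖ Q) * (X ⊗ₖ Y) * (1 ⊗ₖ Q) = X ⊗ₖ (Q * Y * Q) := by
  rw [← mul_kronecker_mul, ← mul_kronecker_mul, one_mul, mul_one]

end Kronecker

/-- The real form of multiplication by the complex number `α - iβ`. -/
def rotScale (α β : ℝ) : Matrix (Fin 2) (Fin 2) ℝ :=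
  !![α, β; -β, α]

lemma rotScale_transpose_mul_self (α β : ℝ) :
    (rotScale α β)ᵀ * rotScale α β = (α ^ 2 + β ^ 2) • 1 := by
  ext i j
  fin_cases i <;> fin_cases j <;> simp [rotScale, mul_apply, Fin.sum_univ_two] <;> ring

lemma rotScale_add_transpose (α β : ℝ) : rotScale α β + (rotScale α β)ᵀ = (2 * α) • 1 := by
  ext i j
  fin_cases i <;> fin_cases j <;> simp [rotScale] <;> ring

lemma symmPart_one_kronecker_add_smul_rotScale_kronecker {m : Type*} {S₁ S₂ : Matrix m m ℝ}
    (h₁ : S₁.IsHermitian) (h₂ : S₂.IsHermitian) (α β t : ℝ) :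
    (1 / 2 : ℝ) • (1 ⊗ₖ S₁ + t • (rotScale α β ⊗ₖ S₂) + (1 ⊗ₖ S₁ + t • (rotScale α β ⊗ₖ S₂))ᵀ) =
      1 ⊗ₖ (S₁ + (t * α) • S₂) := by
  rw [isHermitian_iff_isSymm] at h₁ h₂
  have hsum : rotScale α β ⊗ₖ S₂ + (rotScale α β)ᵀ ⊗ₖ S₂ = (2 * α) • (1 ⊗ₖ S₂) := by
    rw [← add_kronecker, rotScale_add_transpose, smul_kronecker]
  rw [transpose_add, transpose_smul, ← kroneckerMap_transpose, ← kroneckerMap_transpose,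
    transpose_one, h₁.eq, h₂.eq, kronecker_add, kronecker_smul]
  linear_combination (norm := module) (t / 2) • hsum

lemma PosSemidef.conj_of_isHermitian {m : Type*} [Fintype m] {A Q : Matrix m m ℝ}
    (hA : A.PosSemidef) (hQ : Q.IsHermitian) : (Q * A * Q).PosSemidef := by
  simpa [(isHermitian_iff_isSymm.1 hQ).eq] using hA.mul_mul_conjTranspose_same Q

variable {m l : Type*} [Fintype m] [DecidableEq m] [Fintype l] [DecidableEq l]
  {S T : Matrix m m ℝ} {c : ℝ}

lemma IsHermitian.spectrum_real_nonempty [Nonempty m] (hS : S.IsHermitian) :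
    (spectrum ℝ S).Nonempty :=
  ⟨_, hS.eigenvalues_mem_spectrum_real (Classical.arbitrary m)⟩

lemma IsHermitian.algebraMap_lamMin_le (hS : S.IsHermitian) : algebraMap ℝ _ (lamMin S) ≤ S :=
  algebraMap_le_of_le_spectrum (fun _ hx ↦ csInf_le S.finite_real_spectrum.bddBelow hx)
    hS.isSelfAdjoint

lemma IsHermitian.le_algebraMap_lamMax (hS : S.IsHermitian) : S ≤ algebraMap ℝ _ (lamMax S) :=
  le_algebraMap_of_spectrum_le (fun _ hx ↦ le_csSup S.finite_real_spectrum.bddAbove hx)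
    hS.isSelfAdjoint

lemma IsHermitian.le_lamMin [Nonempty m] (hS : S.IsHermitian) (h : algebraMap ℝ _ c ≤ S) :
    c ≤ lamMin S :=
  le_csInf hS.spectrum_real_nonempty ((algebraMap_le_iff_le_spectrum hS.isSelfAdjoint).1 h)

lemma PosSemidef.lamMin_nonneg (hS : S.PosSemidef) : 0 ≤ lamMin S :=
  Real.sInf_nonneg fun _ hx ↦ spectrum_nonneg_of_nonneg hS.nonneg hx

lemma PosSemidef.lamMax_nonneg (hS : S.PosSemidef) : 0 ≤ lamMax S :=
  Real.sSup_nonneg fun _ hx ↦ spectrum_nonneg_of_nonneg hS.nonneg hx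

lemma PosDef.lamMin_pos [Nonempty m] (hS : S.PosDef) : 0 < lamMin S := by
  have hmem : lamMin S ∈ spectrum ℝ S :=
    hS.1.spectrum_real_nonempty.csInf_mem S.finite_real_spectrum
  rw [hS.1.spectrum_real_eq_range_eigenvalues] at hmem
  obtain ⟨i, hi⟩ := hmem
  exact hi ▸ hS.eigenvalues_pos i

lemma PosSemidef.l2_opNorm_le (hT : T.PosSemidef) (hc : 0 ≤ c) (h : T ≤ algebraMap ℝ _ c) :
    ‖T‖ ≤ c := by
  have hspec := (le_algebraMap_iff_spectrum_le hT.1.isSelfAdjoint).1 h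
  have hnorm : ‖T‖ = ‖hT.1.eigenvalues‖ := by
    conv_lhs => rw [hT.1.spectral_theorem, Unitary.conjStarAlgAut_apply, mul_assoc,
      CStarRing.norm_coe_unitary_mul, ← Unitary.coe_star, CStarRing.norm_mul_coe_unitary,
      l2_opNorm_diagonal]
    rfl
  rw [hnorm, pi_norm_le_iff_of_nonneg hc]
  intro i
  simpa [abs_of_nonneg (hT.eigenvalues_nonneg i)] using
    hspec _ (hT.1.eigenvalues_mem_spectrum_real i)

lemma sigmaMax_le_l2_opNorm [Nonempty m] (B : Matrix m m ℝ) : sigmaMax B ≤ ‖B‖ := by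
  have h : lamMax (Bᵀ * B) ≤ ‖B‖ * ‖B‖ := by
    rw [← conjTranspose_eq_transpose_of_trivial, ← l2_opNorm_conjTranspose_mul_self]
    exact Real.sSup_le (fun _ hx ↦ (le_abs_self _).trans (spectrum.norm_le_norm_of_mem hx))
      (norm_nonneg _)
  calc sigmaMax B ≤ √(‖B‖ * ‖B‖) := Real.sqrt_le_sqrt h
    _ = ‖B‖ := Real.sqrt_mul_self (norm_nonneg B)

lemma one_kronecker_algebraMap (c : ℝ) :
    (1 : Matrix l l ℝ) ⊗ₖ algebraMap ℝ (Matrix m m ℝ) c = algebraMap ℝ _ c := by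
  simp only [Algebra.algebraMap_eq_smul_one, kronecker_smul, one_kronecker_one]

lemma PosSemidef.l2_opNorm_one_kronecker_le (hS : S.PosSemidef) :
    ‖(1 : Matrix l l ℝ) ⊗ₖ S‖ ≤ lamMax S := by
  have h := one_kronecker_mono (l := l) hS.1.le_algebraMap_lamMax
  rw [one_kronecker_algebraMap] at h
  exact (PosSemidef.one.kronecker hS).l2_opNorm_le hS.lamMax_nonneg h

lemma PosDef.posDef_invSqrt {P : Matrix m m ℝ} (hP : P.PosDef) : hP.invSqrt.PosDef := by
  refine PosDef.inv ?_
  have hD : (diagonal ((↑) ∘ (√·) ∘ hP.posSemidef.1.eigenvalues) : Matrix m m ℝ).PosDef :=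
    PosDef.diagonal fun i ↦ by simpa using hP.eigenvalues_pos i
  simpa [star_eq_conjTranspose] using
    hD.mul_mul_conjTranspose_same (vecMul_injective_iff_isUnit.mpr Unitary.isUnit_coe)

lemma PosDef.conj_of_posDef {M Q : Matrix m m ℝ} (hM : M.PosDef) (hQ : Q.PosDef) :
    (Q * M * Q).PosDef := by
  simpa [(isHermitian_iff_isSymm.1 hQ.1).eq] using
    hM.conjTranspose_mul_mul_same (mulVec_injective_iff_isUnit.mpr hQ.isUnit)

lemma l2_opNorm_rotScale_kronecker_one [Nonempty m] (α β : ℝ) :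
    ‖rotScale α β ⊗ₖ (1 : Matrix m m ℝ)‖ = √(α ^ 2 + β ^ 2) := by
  set X := rotScale α β ⊗ₖ (1 : Matrix m m ℝ)
  have hX : Xᴴ * X = (α ^ 2 + β ^ 2) • 1 := by
    rw [conjTranspose_kronecker, conjTranspose_one, ← mul_kronecker_mul,
      conjTranspose_eq_transpose_of_trivial, rotScale_transpose_mul_self, one_mul,
      smul_kronecker, one_kronecker_one]
  have hsq : ‖X‖ * ‖X‖ = α ^ 2 + β ^ 2 := by
    rw [← l2_opNorm_conjTranspose_mul_self, hX, norm_smul, norm_one, mul_one,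
      Real.norm_of_nonneg (by positivity)]
  rw [← hsq, Real.sqrt_mul_self (norm_nonneg X)]

lemma lamMin_add_mul_le_lamMin_one_kronecker [Nonempty m] [Nonempty l] {S₁ S₂ : Matrix m m ℝ}
    (h₁ : S₁.IsHermitian) (h₂ : S₂.IsHermitian) (hc : 0 ≤ c) :
    lamMin S₁ + c * lamMin S₂ ≤ lamMin ((1 : Matrix l l ℝ) ⊗ₖ (S₁ + c • S₂)) := by
  have hW : ((1 : Matrix l l ℝ) ⊗ₖ (S₁ + c • S₂)).IsHermitian := by
    rw [IsHermitian, conjTranspose_kronecker, conjTranspose_one,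
      (h₁.add (h₂.smul (IsSelfAdjoint.all c))).eq]
  refine hW.le_lamMin ?_
  rw [← one_kronecker_algebraMap]
  refine one_kronecker_mono ?_
  rw [map_add, map_mul, ← Algebra.smul_def]
  exact add_le_add h₁.algebraMap_lamMin_le
    (smul_le_smul_of_nonneg_left h₂.algebraMap_lamMin_le hc)

lemma sigmaMax_one_kronecker_add_smul_rotScale_kronecker_le [Nonempty m] {S₁ S₂ : Matrix m m ℝ}
    (h₁ : S₁.PosSemidef) (h₂ : S₂.PosSemidef) (α β : ℝ) {t : ℝ} (ht : 0 ≤ t) :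
    sigmaMax (1 ⊗ₖ S₁ + t • (rotScale α β ⊗ₖ S₂)) ≤
      lamMax S₁ + t * √(α ^ 2 + β ^ 2) * lamMax S₂ := by
  have hfactor : rotScale α β ⊗ₖ S₂ = (rotScale α β ⊗ₖ 1) * (1 ⊗ₖ S₂) := by
    rw [← mul_kronecker_mul, mul_one, one_mul]
  calc _ ≤ ‖1 ⊗ₖ S₁ + t • (rotScale α β ⊗ₖ S₂)‖ := sigmaMax_le_l2_opNorm _
    _ ≤ ‖(1 : Matrix (Fin 2) (Fin 2) ℝ) ⊗ₖ S₁‖ + t * ‖rotScale α β ⊗ₖ (1 : Matrix m m ℝ)‖ *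
          ‖(1 : Matrix (Fin 2) (Fin 2) ℝ) ⊗ₖ S₂‖ := by
      grw [norm_add_le, norm_smul, Real.norm_of_nonneg ht, hfactor, norm_mul_le, mul_assoc]
    _ ≤ _ := by
      rw [l2_opNorm_rotScale_kronecker_one]
      gcongr
      exacts [h₁.l2_opNorm_one_kronecker_le, h₂.l2_opNorm_one_kronecker_le]

end Matrix

theorem stmt7 (n : ℕ) (hn : 1 ≤ n) (α β : ℝ) (hα : 0 ≤ α)
    (C : Matrix (Fin 2) (Fin 2) ℝ) (hC : C = !![α, β; -β, α])
    (M A P : Matrix (Fin n) (Fin n) ℝ)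
    (hM : M.PosDef) (hA : A.PosSemidef) (hP : P.PosDef)
    (Δt : ℝ) (hΔt : 0 ≤ Δt)
    (B : Matrix (Fin 2 × Fin n) (Fin 2 × Fin n) ℝ)
    (hB : B = ((1 : Matrix (Fin 2) (Fin 2) ℝ) ⊗ₖ hP.invSqrt) *
        ((1 : Matrix (Fin 2) (Fin 2) ℝ) ⊗ₖ M + Δt • (C ⊗ₖ A)) *
        ((1 : Matrix (Fin 2) (Fin 2) ℝ) ⊗ₖ hP.invSqrt)) :
    ((1 / 2 : ℝ) • (B + Bᵀ)).PosDef ∧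
    ktilde B ≤
      (lamMax (hP.invSqrt * M * hP.invSqrt)
          + Δt * Real.sqrt (α ^ 2 + β ^ 2) * lamMax (hP.invSqrt * A * hP.invSqrt)) /
      (lamMin (hP.invSqrt * M * hP.invSqrt)
          + Δt * α * lamMin (hP.invSqrt * A * hP.invSqrt)) := by
  have : Nonempty (Fin n) := Fin.pos_iff_nonempty.mp hn
  have hQ := hP.posDef_invSqrt
  have hS₁ := hM.conj_of_posDef hQ
  have hS₂ := hA.conj_of_isHermitian hQ.1
  have hBS : B = 1 ⊗ₖ (hP.invSqrt * M * hP.invSqrt) +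
      Δt • (rotScale α β ⊗ₖ (hP.invSqrt * A * hP.invSqrt)) := by
    rw [hB, hC, mul_add, add_mul, Matrix.mul_smul, Matrix.smul_mul,
      one_kronecker_mul_kronecker_mul_one_kronecker, one_kronecker_mul_kronecker_mul_one_kronecker,
      rotScale]
  have hcoef : 0 ≤ Δt * α := mul_nonneg hΔt hα
  have hnum := sigmaMax_one_kronecker_add_smul_rotScale_kronecker_le hS₁.posSemidef hS₂ α β hΔt
  have hden := lamMin_add_mul_le_lamMin_one_kronecker (l := Fin 2) hS₁.1 hS₂.1 hcoef
  rw [hBS, ktilde, symmPart_one_kronecker_add_smul_rotScale_kronecker hS₁.1 hS₂.1]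
  refine ⟨PosDef.one.kronecker (hS₁.add_posSemidef (hS₂.smul hcoef)), ?_⟩
  exact div_le_div₀ ((Real.sqrt_nonneg _).trans hnum) hnum
    (by have := hS₁.lamMin_pos; have := hS₂.lamMin_nonneg; positivity) hden
end

section
/- Let α ≥ 0 and β be real numbers, let C = [[α, β], [−β, α]], let M be a real symmetric positive definite n×n matrix, let A be a real symmetric positive semidefinite n×n matrix, and let Δt ≥ 0. Set 𝔹 = I₂ ⊗ M + Δt·(C ⊗ A). Then the symmetric part satisfies (𝔹 + 𝔹ᵀ)/2 = I₂ ⊗ (M + Δt·α·A), this symmetric part is positive definite, and consequently 𝔹 is invertible. -/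
open Matrix Kronecker

/-! Transposing `I₂ ⊗ M + Δt • (C ⊗ A)` with `M`, `A` symmetric only replaces `C` by `Cᵀ`, and
`C + Cᵀ = 2α • I₂`, so the symmetric part is `I₂ ⊗ (M + Δt α A)`: a Kronecker product of positive
definite matrices. Invertibility follows because a kernel vector `v` of `B` also satisfies
`vᵀ Bᵀ v = 0`, so it is isotropic for the symmetric part. -/

namespace Matrix

variable {ι m : Type*}

theorem isUnit_of_posDef_half_smul_add_transpose [Fintype m] [DecidableEq m] {B : Matrix m m ℝ}
    (hB : ((1 / 2 : ℝ) • (B + Bᵀ)).PosDef) : IsUnit B := by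
  rw [isUnit_iff_isUnit_det, isUnit_iff_ne_zero]
  intro hdet
  obtain ⟨v, hv0, hBv⟩ := exists_mulVec_eq_zero_iff.mpr hdet
  have hBtv : v ⬝ᵥ (Bᵀ *ᵥ v) = 0 := by
    rw [mulVec_transpose, dotProduct_comm, ← dotProduct_mulVec, hBv, dotProduct_zero]
  have hpos := hB.dotProduct_mulVec_pos hv0
  simp only [smul_mulVec, add_mulVec, dotProduct_smul, dotProduct_add, star_trivial, hBv,
    dotProduct_zero, hBtv, add_zero, smul_zero, lt_self_iff_false] at hpos

theorem half_smul_add_transpose_one_kronecker_add_smul_kronecker [DecidableEq ι]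
    {M A : Matrix m m ℝ} (hM : M.IsSymm) (hA : A.IsSymm) (C : Matrix ι ι ℝ) (t : ℝ) :
    (1 / 2 : ℝ) • ((1 ⊗ₖ M + t • (C ⊗ₖ A)) + (1 ⊗ₖ M + t • (C ⊗ₖ A))ᵀ) =
      1 ⊗ₖ M + t • (((1 / 2 : ℝ) • (C + Cᵀ)) ⊗ₖ A) := by
  rw [transpose_add, transpose_smul, ← kroneckerMap_transpose, ← kroneckerMap_transpose,
    transpose_one, hM.eq, hA.eq, smul_kronecker, add_kronecker]
  module

theorem half_smul_add_transpose_rotation (α β : ℝ) :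
    (1 / 2 : ℝ) • (!![α, β; -β, α] + !![α, β; -β, α]ᵀ) = α • (1 : Matrix (Fin 2) (Fin 2) ℝ) := by
  ext i j
  fin_cases i <;> fin_cases j <;> simp <;> ring

end Matrix

theorem stmt16 (n : ℕ) (α β : ℝ) (hα : 0 ≤ α)
    (C : Matrix (Fin 2) (Fin 2) ℝ) (hC : C = !![α, β; -β, α])
    (M A : Matrix (Fin n) (Fin n) ℝ)
    (hM : M.PosDef) (hA : A.PosSemidef)
    (Δt : ℝ) (hΔt : 0 ≤ Δt)
    (B : Matrix (Fin 2 × Fin n) (Fin 2 × Fin n) ℝ)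
    (hB : B = (1 : Matrix (Fin 2) (Fin 2) ℝ) ⊗ₖ M + Δt • (C ⊗ₖ A)) :
    (1 / 2 : ℝ) • (B + Bᵀ) =
        (1 : Matrix (Fin 2) (Fin 2) ℝ) ⊗ₖ (M + (Δt * α) • A) ∧
    ((1 / 2 : ℝ) • (B + Bᵀ)).PosDef ∧
    IsUnit B := by
  have hsymm : (1 / 2 : ℝ) • (B + Bᵀ) = (1 : Matrix (Fin 2) (Fin 2) ℝ) ⊗ₖ (M + (Δt * α) • A) := by
    rw [hB, half_smul_add_transpose_one_kronecker_add_smul_kronecker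
      (isHermitian_iff_isSymm.mp hM.isHermitian) (isHermitian_iff_isSymm.mp hA.isHermitian), hC,
      half_smul_add_transpose_rotation, smul_kronecker, kronecker_add, kronecker_smul, smul_smul]
  have hpos : ((1 / 2 : ℝ) • (B + Bᵀ)).PosDef := by
    rw [hsymm]
    exact PosDef.one.kronecker (hM.add_posSemidef (hA.smul (mul_nonneg hΔt hα)))
  exact ⟨hsymm, hpos, isUnit_of_posDef_half_smul_add_transpose hpos⟩
end
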